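/- (Cases 9 and 10: reduction of a general momentum value by a translation) Let α₀, u₀ ∈ ℝ³ with u₀ ≠ 0 and α₀×u₀ ≠ 0. Then there exist a unique vector a ∈ ℝ³ with ⟨a,u₀⟩ = 0 and a unique scalar δ ∈ ℝ such that a×u₀ + δu₀ = α₀; one has δ = 0 if and only if ⟨α₀,u₀⟩ = 0. Moreover (I,a)·J⁻¹(δu₀, u₀) = J⁻¹(α₀, u₀), i.e. (q¹,q²,p¹,p²) ∈ J⁻¹(α₀,u₀) if and only if (q¹−a, q²−a, p¹, p²) ∈ J⁻¹(δu₀, u₀); and also (I,a)·( J⁻¹(δu₀,u₀) ∩ M_{G⁴} ) = J⁻¹(α₀,u₀) ∩ M_{G⁴}. -/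

import Mathlib

open Matrix

/-- Vectors in ℝ³. -/
abbrev V3 : Type := Fin 3 → ℝ

/-- The two-body phase space M = ℝ³ × ℝ³ × ℝ³ × ℝ³, points (q¹, q², p¹, p²). -/
abbrev M2B : Type := V3 × V3 × V3 × V3

/-- A 3×3 real matrix is special orthogonal. -/
def SO3 (A : Matrix (Fin 3) (Fin 3) ℝ) : Prop := Aᵀ * A = 1 ∧ A.det = 1

/-- The action of (A, a) ∈ SE(3) on the phase space:
(A,a)·(q¹,q²,p¹,p²) = (Aq¹+a, Aq²+a, Ap¹, Ap²). -/
def act (A : Matrix (Fin 3) (Fin 3) ℝ) (a : V3) (m : M2B) : M2B :=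
  (A *ᵥ m.1 + a, A *ᵥ m.2.1 + a, A *ᵥ m.2.2.1, A *ᵥ m.2.2.2)

/-- The isotropy subgroup SE(3)_{(q,p)} of a point of M, as a set of pairs (A,a)
with A special orthogonal. -/
def isotropy (m : M2B) : Set (Matrix (Fin 3) (Fin 3) ℝ × V3) :=
  {g | SO3 g.1 ∧ act g.1 g.2 m = m}

/-- The momentum map J(q¹,q²,p¹,p²) = (q¹×p¹ + q²×p², p¹+p²). -/
def Jmom (m : M2B) : V3 × V3 :=
  (m.1 ⨯₃ m.2.2.1 + m.2.1 ⨯₃ m.2.2.2, m.2.2.1 + m.2.2.2)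

/-- G¹(x) = {(A,a) ∈ SE(3) : a = x − Ax}. -/
def G1 (x : V3) : Set (Matrix (Fin 3) (Fin 3) ℝ × V3) :=
  {g | SO3 g.1 ∧ g.2 = x - g.1 *ᵥ x}

/-- G²(y) = {(A,0) ∈ SE(3) : Ay = y}. -/
def G2 (y : V3) : Set (Matrix (Fin 3) (Fin 3) ℝ × V3) :=
  {g | SO3 g.1 ∧ g.1 *ᵥ y = y ∧ g.2 = 0}

/-- G³(x,y) = {(A,a) ∈ SE(3) : Ay = y and a = x − Ax}. -/
def G3 (x y : V3) : Set (Matrix (Fin 3) (Fin 3) ℝ × V3) :=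
  {g | SO3 g.1 ∧ g.1 *ᵥ y = y ∧ g.2 = x - g.1 *ᵥ x}

/-- G⁴ = {(I, 0)}, the trivial subgroup. -/
def G4 : Set (Matrix (Fin 3) (Fin 3) ℝ × V3) := {((1 : Matrix (Fin 3) (Fin 3) ℝ), (0 : V3))}

/-!
Every vector `α` decomposes uniquely as `a × u + δ u` with `a ⊥ u`: crossing with `u` recovers
`|u|² a = u × α`, and dotting with `u` recovers `δ |u|² = ⟨α, u⟩`. A translation by `c` changes
the momentum map by `(J₁, J₂) ↦ (J₁ + c × J₂, J₂)` and conjugates isotropy groups, so it carries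
`J⁻¹(δu, u)` onto `J⁻¹(α, u)` and preserves trivial isotropy.
-/

section CrossDecomposition

variable {K : Type*} [Field K] {u α a : Fin 3 → K} {d : K}

lemma dot_self_smul_eq_cross_of_cross_add_smul (ha : a ⬝ᵥ u = 0) (h : a ⨯₃ u + d • u = α) :
    (u ⬝ᵥ u) • a = u ⨯₃ α := by
  rw [← h, map_add, LinearMap.map_smul, cross_self, smul_zero, add_zero,
    cross_cross_eq_smul_sub_smul', ha, zero_smul, sub_zero]

lemma mul_dot_self_eq_dot_of_cross_add_smul (h : a ⨯₃ u + d • u = α) :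
    d * (u ⬝ᵥ u) = α ⬝ᵥ u := by
  rw [← h, add_dotProduct, smul_dotProduct, dotProduct_comm (a ⨯₃ u), dot_cross_self, zero_add,
    smul_eq_mul]

lemma existsUnique_cross_add_smul (hu : u ⬝ᵥ u ≠ 0) (α : Fin 3 → K) :
    ∃! ad : (Fin 3 → K) × K, ad.1 ⬝ᵥ u = 0 ∧ ad.1 ⨯₃ u + ad.2 • u = α := by
  refine ⟨((u ⬝ᵥ u)⁻¹ • (u ⨯₃ α), (α ⬝ᵥ u) / (u ⬝ᵥ u)), ⟨?_, ?_⟩, ?_⟩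
  · rw [smul_dotProduct, dotProduct_comm (u ⨯₃ α), dot_self_cross, smul_zero]
  · rw [LinearMap.map_smul₂, ← cross_anticomm, smul_neg, cross_cross_eq_smul_sub_smul',
      smul_sub, smul_smul, smul_smul, inv_mul_cancel₀ hu, one_smul, div_eq_inv_mul,
      dotProduct_comm u α, mul_comm]
    abel
  · rintro ⟨a, d⟩ ⟨ha, h⟩
    refine Prod.ext ?_ ((eq_div_iff hu).mpr (mul_dot_self_eq_dot_of_cross_add_smul h))
    rw [← dot_self_smul_eq_cross_of_cross_add_smul ha h, smul_smul, inv_mul_cancel₀ hu,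
      one_smul]

lemma eq_zero_iff_dot_eq_zero_of_cross_add_smul (hu : u ⬝ᵥ u ≠ 0)
    (h : a ⨯₃ u + d • u = α) : d = 0 ↔ α ⬝ᵥ u = 0 := by
  rw [← mul_dot_self_eq_dot_of_cross_add_smul h, mul_eq_zero, or_iff_left hu]

end CrossDecomposition

section Translation

lemma act_one_act_one (c c' : V3) (m : M2B) : act 1 c (act 1 c' m) = act 1 (c' + c) m := by
  simp [act, add_assoc]

lemma act_one_zero (m : M2B) : act 1 0 m = m := by
  simp [act]

lemma image_act_one (c : V3) (S : Set M2B) : act 1 c '' S = act 1 (-c) ⁻¹' S :=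
  congrFun (Set.image_eq_preimage_of_inverse (f := act 1 c) (g := act 1 (-c))
    (fun m => by rw [act_one_act_one, add_neg_cancel, act_one_zero])
    (fun m => by rw [act_one_act_one, neg_add_cancel, act_one_zero])) S

lemma Jmom_act_one (c : V3) (m : M2B) :
    Jmom (act 1 c m) = ((Jmom m).1 + c ⨯₃ (Jmom m).2, (Jmom m).2) := by
  obtain ⟨q1, q2, p1, p2⟩ := m
  simp only [Jmom, act, one_mulVec, map_add, LinearMap.add_apply]
  congr 1
  abel

lemma Jmom_act_one_neg_eq_iff {a u α : V3} {d : ℝ} (h : a ⨯₃ u + d • u = α) (m : M2B) :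
    Jmom (act 1 (-a) m) = (d • u, u) ↔ Jmom m = (α, u) := by
  rw [Jmom_act_one, ← h]
  obtain ⟨J₁, J₂⟩ := Jmom m
  simp only [Prod.mk.injEq, map_neg, LinearMap.neg_apply]
  constructor
  · rintro ⟨hJ₁, rfl⟩
    exact ⟨by rw [← hJ₁]; abel, rfl⟩
  · rintro ⟨rfl, rfl⟩
    exact ⟨by abel, rfl⟩

lemma mem_isotropy_act_one (A : Matrix (Fin 3) (Fin 3) ℝ) (b c : V3) (m : M2B) :
    (A, b) ∈ isotropy (act 1 c m) ↔ (A, A *ᵥ c + b - c) ∈ isotropy m := by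
  obtain ⟨q1, q2, p1, p2⟩ := m
  simp only [isotropy, act, Set.mem_ofPred_eq, one_mulVec, mulVec_add, Prod.mk.injEq]
  have shift : ∀ x y : V3, x + A *ᵥ c + b = y + c ↔ x + (A *ᵥ c + b - c) = y := fun x y => by
    rw [add_sub_assoc', ← add_assoc, sub_eq_iff_eq_add]
  rw [shift, shift]

lemma isotropy_act_one_eq_G4 (c : V3) {m : M2B} (h : isotropy m = G4) :
    isotropy (act 1 c m) = G4 := by
  ext ⟨A, b⟩
  rw [mem_isotropy_act_one, h]
  simp only [G4, Set.mem_singleton_iff, Prod.mk.injEq]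
  constructor
  · rintro ⟨rfl, hb⟩
    simpa using hb
  · rintro ⟨rfl, rfl⟩
    simp

lemma isotropy_act_one_eq_G4_iff (c : V3) (m : M2B) :
    isotropy (act 1 c m) = G4 ↔ isotropy m = G4 := by
  refine ⟨fun h => ?_, isotropy_act_one_eq_G4 c⟩
  simpa [act_one_act_one, act_one_zero] using isotropy_act_one_eq_G4 (-c) h

end Translation

theorem stmt18 (a0 u0 : V3) (hu : u0 ≠ 0) :
    (∃! ad : V3 × ℝ, ad.1 ⬝ᵥ u0 = 0 ∧ ad.1 ⨯₃ u0 + ad.2 • u0 = a0) ∧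
    ∀ (a : V3) (d : ℝ), a ⬝ᵥ u0 = 0 → a ⨯₃ u0 + d • u0 = a0 →
      ((d = 0 ↔ a0 ⬝ᵥ u0 = 0) ∧
       act 1 a '' {m : M2B | Jmom m = (d • u0, u0)} =
         {m : M2B | Jmom m = (a0, u0)} ∧
       (∀ q1 q2 p1 p2 : V3, Jmom (q1, q2, p1, p2) = (a0, u0) ↔
          Jmom (q1 - a, q2 - a, p1, p2) = (d • u0, u0)) ∧
       act 1 a '' {m : M2B | Jmom m = (d • u0, u0) ∧ isotropy m = G4} =
         {m : M2B | Jmom m = (a0, u0) ∧ isotropy m = G4}) := by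
  have hu' : u0 ⬝ᵥ u0 ≠ 0 := fun h0 => hu (dotProduct_self_eq_zero.mp h0)
  refine ⟨existsUnique_cross_add_smul hu' a0, fun a d _ h => ⟨?_, ?_, ?_, ?_⟩⟩
  · exact eq_zero_iff_dot_eq_zero_of_cross_add_smul hu' h
  · ext m
    rw [image_act_one]
    exact Jmom_act_one_neg_eq_iff h m
  · intro q1 q2 p1 p2
    have translate : ((q1 - a, q2 - a, p1, p2) : M2B) = act 1 (-a) (q1, q2, p1, p2) := by
      simp [act, sub_eq_add_neg]
    rw [translate, Jmom_act_one_neg_eq_iff h]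
  · ext m
    rw [image_act_one]
    exact and_congr (Jmom_act_one_neg_eq_iff h m) (isotropy_act_one_eq_G4_iff (-a) m)
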